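/- Let H be an N×N real symmetric tridiagonal matrix with N ≥ 2 whose eigenvalues λ_1 < λ_2 < ⋯ < λ_N are pairwise distinct. For each i set M_i = λ_i I_N − H. Then for every i ∈ {1, …, N}: ∏_{j ≠ i} (λ_i − λ_j)² = ∑_{k=1}^N det((M_i)_{k|k})² + 2 ∑_{k=1}^{N−1} det((M_i)_{k|k+1})² + 2 ∑_{1 ≤ k < ℓ ≤ N, ℓ−k > 1} det((M_i)_{k|k}) · det((M_i)_{ℓ|ℓ}). -/

import Mathlib

/-!
With `λ = λ_i`, the matrix `M = λ I - H` is symmetric and singular, so its adjugate `A` is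
symmetric and satisfies `M A = 0`. If `A ≠ 0`, some minor of `M` of size `N - 1` is invertible,
hence `ker M` is a line containing every column of `A`: `A` has rank one and
`A_{kl}^2 = A_{kk} A_{ll}`. Jacobi's formula `χ' = tr (adj (X I - H))` evaluated at `λ_i` gives
`tr A = ∏_{j ≠ i} (λ_i - λ_j)`. Squaring `tr A = ∑_k A_{kk}` and splitting the cross terms
`A_{kk} A_{ll}` (`k < l`) into adjacent ones, equal to `A_{k+1,k}^2 = det (M_{k|k+1})^2`, and
the others gives the identity, since `A_{kk} = det (M_{k|k})`.
-/

open Matrix Polynomial Finset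

theorem sq_sum_eq_sum_sq_add_two_mul_sum_lt {ι R : Type*} [Fintype ι] [LinearOrder ι]
    [CommSemiring R] (d : ι → R) :
    (∑ i, d i) ^ 2 = ∑ i, d i ^ 2 + 2 * ∑ p ∈ univ.filter (fun p : ι × ι => p.1 < p.2),
      d p.1 * d p.2 := by
  have hsplit : ∀ p : ι × ι, d p.1 * d p.2 = (if p.1 < p.2 then d p.1 * d p.2 else 0)
      + (if p.2 < p.1 then d p.1 * d p.2 else 0) + (if p.1 = p.2 then d p.1 * d p.2 else 0) := by
    intro p
    rcases lt_trichotomy p.1 p.2 with h | h | h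
    · simp [h, h.ne, h.not_gt]
    · simp [h]
    · simp [h, h.ne', h.not_gt]
  have hswap : ∑ p ∈ univ.filter (fun p : ι × ι => p.2 < p.1), d p.1 * d p.2
      = ∑ p ∈ univ.filter (fun p : ι × ι => p.1 < p.2), d p.1 * d p.2 :=
    sum_equiv (Equiv.prodComm ι ι) (by simp) (fun p _ => mul_comm _ _)
  have hdiag : ∑ p : ι × ι, (if p.1 = p.2 then d p.1 * d p.2 else 0) = ∑ i, d i ^ 2 := by
    simp [Fintype.sum_prod_type, sq]
  rw [sq, sum_mul_sum, ← Fintype.sum_prod_type', Fintype.sum_congr _ _ hsplit, sum_add_distrib,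
    sum_add_distrib, hdiag, ← sum_filter, ← sum_filter, hswap]
  ring

theorem Fin.sum_filter_lt_eq_sum_castSucc_succ_add {m : ℕ} {M : Type*} [AddCommMonoid M]
    (f : Fin (m + 2) × Fin (m + 2) → M) :
    ∑ p ∈ univ.filter (fun p : Fin (m + 2) × Fin (m + 2) => p.1 < p.2), f p
      = ∑ k : Fin (m + 1), f (k.castSucc, k.succ)
        + ∑ p ∈ univ.filter (fun p : Fin (m + 2) × Fin (m + 2) => (p.1 : ℕ) + 1 < p.2), f p := by
  have hgap : (univ.filter fun p : Fin (m + 2) × Fin (m + 2) => p.1 < p.2).filter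
      (fun p => (p.1 : ℕ) + 1 < p.2) = univ.filter fun p => (p.1 : ℕ) + 1 < p.2 := by
    ext p; simp only [mem_filter, mem_univ, true_and, Fin.lt_def]; omega
  have hadj : ∑ k : Fin (m + 1), f (k.castSucc, k.succ) = ∑ p ∈ (univ.filter
      fun p : Fin (m + 2) × Fin (m + 2) => p.1 < p.2).filter (fun p => ¬ (p.1 : ℕ) + 1 < p.2),
      f p := by
    refine sum_bij (fun k _ => (k.castSucc, k.succ)) ?_ ?_ ?_ fun _ _ => rfl
    · intro k _
      simp only [mem_filter, mem_univ, true_and, Fin.lt_def, Fin.val_castSucc, Fin.val_succ]; omega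
    · intro k _ k' _ h
      exact Fin.castSucc_injective _ (Prod.ext_iff.mp h).1
    · intro p hp
      simp only [mem_filter, mem_univ, true_and, Fin.lt_def] at hp
      refine ⟨⟨p.1, by omega⟩, mem_univ _, Prod.ext (Fin.ext rfl) (Fin.ext ?_)⟩
      simp only [Fin.val_succ]; omega
  rw [← sum_filter_add_sum_filter_not _ (fun p : Fin (m + 2) × Fin (m + 2) => (p.1 : ℕ) + 1 < p.2),
    hgap, hadj, add_comm]

namespace Matrix

variable {n : Type*} [Fintype n] [DecidableEq n]

theorem derivative_det {R : Type*} [CommRing R] (A : Matrix n n R[X]) :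
    derivative A.det = trace (adjugate A * A.map derivative) := by
  have hcol : ∀ k, (adjugate A * A.map derivative) k k
      = ∑ σ : Equiv.Perm n, (Equiv.Perm.sign σ : R[X])
          * ((∏ j ∈ univ.erase k, A (σ j) j) * derivative (A (σ k) k)) := by
    intro k
    change (adjugate A *ᵥ fun j => derivative (A j k)) k = _
    rw [← cramer_eq_adjugate_mulVec, cramer_apply, det_apply']
    refine sum_congr rfl fun σ _ => ?_
    rw [← mul_prod_erase univ _ (mem_univ k), updateCol_self, mul_comm (derivative _)]
    congr 2
    exact prod_congr rfl fun j hj => updateCol_ne (mem_erase.mp hj).1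
  simp only [trace, diag_apply, hcol]
  rw [det_apply', map_sum, Finset.sum_comm (γ := n)]
  refine sum_congr rfl fun σ _ => ?_
  rw [derivative_mul, derivative_intCast, zero_mul, zero_add, derivative_prod_finset, mul_sum]

section charpoly

variable {R : Type*} [CommRing R]

theorem charmatrix_map_derivative (M : Matrix n n R) : M.charmatrix.map derivative = 1 := by
  ext i j
  obtain rfl | h := eq_or_ne i j <;> simp [*, one_apply_ne]

theorem charmatrix_map_eval (M : Matrix n n R) (t : R) :
    M.charmatrix.map (eval t) = scalar n t - M := by
  ext i j
  obtain rfl | h := eq_or_ne i j <;> simp [*]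

theorem derivative_charpoly (M : Matrix n n R) :
    derivative M.charpoly = trace (adjugate M.charmatrix) := by
  rw [charpoly, derivative_det, charmatrix_map_derivative, mul_one]

theorem eval_derivative_charpoly (M : Matrix n n R) (t : R) :
    (derivative M.charpoly).eval t = trace (adjugate (scalar n t - M)) := by
  rw [derivative_charpoly, ← coe_evalRingHom, AddMonoidHom.map_trace, ← RingHom.mapMatrix_apply,
    RingHom.map_adjugate, RingHom.mapMatrix_apply, coe_evalRingHom, charmatrix_map_eval]

end charpoly

section Field

variable {K : Type*} [Field K] {m : ℕ}

theorem smul_eq_smul_of_mulVec_eq_zero (B : Matrix (Fin (m + 1)) (Fin (m + 1)) K)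
    {p q : Fin (m + 1)} (hpq : (B.submatrix p.succAbove q.succAbove).det ≠ 0)
    {x y : Fin (m + 1) → K} (hx : B *ᵥ x = 0) (hy : B *ᵥ y = 0) : x q • y = y q • x := by
  set z := x q • y - y q • x
  have hz : B *ᵥ z = 0 := by simp [z, mulVec_sub, mulVec_smul, hx, hy]
  have hzq : z q = 0 := by simp [z, mul_comm]
  -- `z q = 0`, so the rows of `B z = 0` other than `p` only involve the invertible minor
  have hz' : B.submatrix p.succAbove q.succAbove *ᵥ (z ∘ q.succAbove) = 0 := by
    funext r
    have h := congrFun hz (p.succAbove r)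
    simp only [mulVec, dotProduct, Pi.zero_apply] at h ⊢
    rwa [Fin.sum_univ_succAbove _ q, hzq, mul_zero, zero_add] at h
  have hzs := eq_zero_of_mulVec_eq_zero hpq hz'
  refine sub_eq_zero.mp (funext fun j => Fin.succAboveCases q hzq (fun r => ?_) j)
  exact congrFun hzs r

theorem adjugate_mul_adjugate_of_det_eq_zero (B : Matrix (Fin (m + 1)) (Fin (m + 1)) K)
    (hB : B.det = 0) (k k' l l' : Fin (m + 1)) :
    adjugate B k l * adjugate B k' l' = adjugate B k l' * adjugate B k' l := by
  set A := adjugate B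
  by_cases hA : A = 0
  · simp [hA]
  obtain ⟨q, p, hqp⟩ : ∃ q p, A q p ≠ 0 := by
    by_contra! h
    exact hA (ext h)
  have hminor : (B.submatrix p.succAbove q.succAbove).det ≠ 0 := by
    intro h
    exact hqp (by rw [show A q p = _ from adjugate_fin_succ_eq_det_submatrix B q p, h, mul_zero])
  have hcol : ∀ l, B *ᵥ A.col l = 0 := fun l => by
    rw [← mulVec_single_one, mulVec_mulVec, mul_adjugate, hB, zero_smul, zero_mulVec]
  -- every column of `A` is a multiple of column `p`, whose entry in row `q` is nonzero
  have hprop : ∀ l j, A q p * A j l = A q l * A j p := fun l j => by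
    simpa [mul_comm] using congrFun (smul_eq_smul_of_mulVec_eq_zero B hminor (hcol p) (hcol l)) j
  refine mul_left_cancel₀ (pow_ne_zero 2 hqp) ?_
  linear_combination (A q p * A k' l') * hprop l k + (A q l * A k p) * hprop l' k'
    - (A q p * A k' l) * hprop l' k - (A q l' * A k p) * hprop l k'

theorem IsSymm.adjugate_apply_sq {B : Matrix (Fin (m + 1)) (Fin (m + 1)) K} (hB : B.IsSymm)
    (hdet : B.det = 0) (k l : Fin (m + 1)) :
    B.adjugate k l ^ 2 = B.adjugate k k * B.adjugate l l := by
  have hA : B.adjugate l k = B.adjugate k l := by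
    rw [← transpose_apply B.adjugate, adjugate_transpose, hB.eq]
  rw [sq]
  nth_rw 2 [← hA]
  exact adjugate_mul_adjugate_of_det_eq_zero B hdet k l l k

end Field

section Fin

variable {R : Type*} [CommRing R] {m : ℕ}

theorem adjugate_fin_succ_apply_self (A : Matrix (Fin (m + 1)) (Fin (m + 1)) R) (k : Fin (m + 1)) :
    adjugate A k k = (A.submatrix k.succAbove k.succAbove).det := by
  rw [adjugate_fin_succ_eq_det_submatrix, ← two_mul, pow_mul, neg_one_sq, one_pow, one_mul]

theorem adjugate_fin_succ_apply_sq (A : Matrix (Fin (m + 1)) (Fin (m + 1)) R) (i j : Fin (m + 1)) :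
    adjugate A i j ^ 2 = (A.submatrix j.succAbove i.succAbove).det ^ 2 := by
  rw [adjugate_fin_succ_eq_det_submatrix, mul_pow, ← pow_mul, mul_comm _ 2, pow_mul, neg_one_sq,
    one_pow, one_mul]

end Fin

end Matrix

theorem tridiagonal_eigen_minor_identity_general {n : ℕ}
    (H : Matrix (Fin (n + 2)) (Fin (n + 2)) ℝ)
    (hsymm : H.IsSymm)
    (lam : Fin (n + 2) → ℝ)
    (hchar : H.charpoly = ∏ j, (Polynomial.X - Polynomial.C (lam j)))
    (M : Fin (n + 2) → Matrix (Fin (n + 2)) (Fin (n + 2)) ℝ)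
    (hM : ∀ i, M i = lam i • (1 : Matrix (Fin (n + 2)) (Fin (n + 2)) ℝ) - H)
    (i : Fin (n + 2)) :
    ∏ j ∈ Finset.univ.erase i, (lam i - lam j) ^ 2
      = ∑ k : Fin (n + 2), ((M i).submatrix k.succAbove k.succAbove).det ^ 2
        + 2 * ∑ k : Fin (n + 1),
            ((M i).submatrix (k.castSucc).succAbove (k.succ).succAbove).det ^ 2
        + 2 * ∑ p ∈ Finset.univ.filter
              (fun p : Fin (n + 2) × Fin (n + 2) => (p.1 : ℕ) + 1 < (p.2 : ℕ)),
            ((M i).submatrix p.1.succAbove p.1.succAbove).det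
              * ((M i).submatrix p.2.succAbove p.2.succAbove).det := by
  have hMi : M i = scalar (Fin (n + 2)) (lam i) - H := by rw [hM, smul_one_eq_diagonal]; rfl
  have hMsymm : (M i).IsSymm := by rw [hM]; exact (isSymm_one.smul _).sub hsymm
  have hdet : (M i).det = 0 := by
    rw [hMi, ← eval_charpoly, hchar, eval_prod]
    exact prod_eq_zero (mem_univ i) (by simp)
  have htrace : ∑ k, adjugate (M i) k k = ∏ j ∈ univ.erase i, (lam i - lam j) := by
    change trace (adjugate (M i)) = _
    rw [hMi, ← eval_derivative_charpoly, hchar, ← Lagrange.nodal_eq,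
      Lagrange.eval_nodal_derivative_eval_node_eq (mem_univ i), Lagrange.eval_nodal]
  have hadjacent : ∀ k : Fin (n + 1),
      adjugate (M i) k.castSucc k.castSucc * adjugate (M i) k.succ k.succ
        = ((M i).submatrix k.castSucc.succAbove k.succ.succAbove).det ^ 2 := fun k => by
    rw [mul_comm, ← hMsymm.adjugate_apply_sq hdet, adjugate_fin_succ_apply_sq]
  rw [prod_pow, ← htrace, sq_sum_eq_sum_sq_add_two_mul_sum_lt, Fin.sum_filter_lt_eq_sum_castSucc_succ_add]
  simp only [hadjacent]
  simp only [adjugate_fin_succ_apply_self]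
  ring

/-- Let `H` be an `N×N` real symmetric tridiagonal matrix (`N ≥ 2`)
with pairwise distinct eigenvalues `λ_1 < ⋯ < λ_N`, and set `M_i = λ_i I − H`.  Then
for every `i`:
`∏_{j≠i} (λ_i − λ_j)² = ∑_k det((M_i)_{k|k})² + 2 ∑_{k=1}^{N−1} det((M_i)_{k|k+1})²`
`+ 2 ∑_{ℓ−k>1} det((M_i)_{k|k}) · det((M_i)_{ℓ|ℓ})`. -/
theorem tridiagonal_eigen_minor_identity {n : ℕ}
    (H : Matrix (Fin (n + 2)) (Fin (n + 2)) ℝ)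
    (hsymm : H.IsSymm)
    (htri : ∀ i j : Fin (n + 2), (i : ℕ) + 1 < (j : ℕ) → H i j = 0)
    (lam : Fin (n + 2) → ℝ) (hmono : StrictMono lam)
    (hchar : H.charpoly = ∏ j, (Polynomial.X - Polynomial.C (lam j)))
    (M : Fin (n + 2) → Matrix (Fin (n + 2)) (Fin (n + 2)) ℝ)
    (hM : ∀ i, M i = lam i • (1 : Matrix (Fin (n + 2)) (Fin (n + 2)) ℝ) - H)
    (i : Fin (n + 2)) :
    ∏ j ∈ Finset.univ.erase i, (lam i - lam j) ^ 2
      = ∑ k : Fin (n + 2), ((M i).submatrix k.succAbove k.succAbove).det ^ 2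
        + 2 * ∑ k : Fin (n + 1),
            ((M i).submatrix (k.castSucc).succAbove (k.succ).succAbove).det ^ 2
        + 2 * ∑ p ∈ Finset.univ.filter
              (fun p : Fin (n + 2) × Fin (n + 2) => (p.1 : ℕ) + 1 < (p.2 : ℕ)),
            ((M i).submatrix p.1.succAbove p.1.succAbove).det
              * ((M i).submatrix p.2.succAbove p.2.succAbove).det :=
  tridiagonal_eigen_minor_identity_general H hsymm lam hchar M hM i
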